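/- arXiv:2311.05935 — 4 statements merged into one kernel-verified Lean document; each statement's English description precedes it below -/
import Mathlib

section
/- Let {θ_k}, {μ_k}, {σ_k} be non-negative real sequences with ∑_{k=1}^∞ σ_k < ∞ and θ_k ≤ θ_{k-1} − μ_{k-1} + σ_{k-1} for all k ≥ 1. Then the sequence {θ_k} converges and ∑_{k=1}^∞ μ_k < ∞. -/
open Filter Topology

theorem stmt_0 (θ μ σ : ℕ → ℝ)
    (hθ : ∀ k, 0 ≤ θ k) (hμ : ∀ k, 0 ≤ μ k) (hσ : ∀ k, 0 ≤ σ k)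
    (hsum : Summable σ)
    (hrec : ∀ k : ℕ, 1 ≤ k → θ k ≤ θ (k - 1) - μ (k - 1) + σ (k - 1)) :
    (∃ L : ℝ, Tendsto θ atTop (𝓝 L)) ∧ Summable μ := by
  have hstep : ∀ k : ℕ, θ (k + 1) ≤ θ k - μ k + σ k := by
    intro k
    simpa using hrec (k + 1) (Nat.le_add_left 1 k)
  set S : ℕ → ℝ := fun n => ∑ k ∈ Finset.range n, σ k with hS
  have hSle : ∀ n, S n ≤ ∑' k, σ k := fun n =>
    Summable.sum_le_tsum (Finset.range n) (fun k _ => hσ k) hsum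
  -- partial sums of μ bounded
  have hpart : ∀ n, ∑ k ∈ Finset.range n, μ k + θ n ≤ θ 0 + S n := by
    intro n
    induction n with
    | zero => simp [hS]
    | succ n ih =>
      simp only [hS, Finset.sum_range_succ]
      have := hstep n
      linarith [ih]
  have hμsum : Summable μ := by
    apply summable_of_sum_range_le hμ (c := θ 0 + ∑' k, σ k)
    intro n
    have := hpart n
    have := hθ n
    have := hSle n
    linarith
  refine ⟨?_, hμsum⟩
  -- a n = θ n - S n is antitone and bounded below
  set a : ℕ → ℝ := fun n => θ n - S n with ha
  have hanti : Antitone a := by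
    apply antitone_nat_of_succ_le
    intro n
    have := hstep n
    have := hμ n
    simp only [ha, hS, Finset.sum_range_succ]
    linarith
  have hbdd : BddBelow (Set.range a) := by
    refine ⟨-(∑' k, σ k), ?_⟩
    rintro x ⟨n, rfl⟩
    have := hθ n
    have := hSle n
    simp only [ha]
    linarith
  have haconv : Tendsto a atTop (𝓝 (⨅ n, a n)) :=
    tendsto_atTop_ciInf hanti hbdd
  have hSconv : Tendsto S atTop (𝓝 (∑' k, σ k)) := hsum.hasSum.tendsto_sum_nat
  refine ⟨(⨅ n, a n) + ∑' k, σ k, ?_⟩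
  have : θ = fun n => a n + S n := by
    funext n; simp [ha]
  rw [this]
  exact haconv.add hSconv
end

section
/- Let A ∈ ℝ^{n×n}, B ∈ ℝ^{n×m}, K ∈ ℝ^{m×n}, and let L be a symmetric Laplacian of a connected undirected graph on M vertices with eigenvalues 0 = λ₁ < λ₂ ≤ … ≤ λ_M. Consider the dynamics x(t+1) = (I_M ⊗ A + L ⊗ BK) x(t). If ρ(A + λ_i B K) < 1 for all i = 2,…,M, then for all agents i,j, ‖x_i(t) − x_j(t)‖ → 0 as t → ∞. -/
/-!
Since `Uᵀ L U = diagonal λ` with `U` orthogonal, the columns `u_k` of `U` are eigenvectors of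
`L` and of `Lᵀ`. Stacking the agents' states as the columns of a matrix `X t`, so that
`x t = vec (X t)`, the dynamics read `X (t+1) = A X t + BK X t Lᵀ`; hence each modal coordinate
`X t u_k` evolves by `A + λ_k BK` and, for `k ≠ 0`, tends to zero by Gelfand's formula.
As `L 1 = 0` while `λ_k ≠ 0` for `k ≠ 0`, the vector of ones is a multiple of `u_0`, so `u_0`
has equal entries and the disagreement `x_i - x_j = ∑_k (U_ik - U_jk) X t u_k` involves only
decaying modes.
-/

open Matrix Filter Topology
open scoped Kronecker

theorem tendsto_pow_atTop_nhds_zero_of_spectralRadius_lt_one {A : Type*} [NormedRing A]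
    [NormedAlgebra ℂ A] [CompleteSpace A] {a : A} (h : spectralRadius ℂ a < 1) :
    Tendsto (a ^ ·) atTop (𝓝 0) := by
  obtain ⟨r, hρr, hr1⟩ := ENNReal.lt_iff_exists_nnreal_btwn.mp h
  have hbound : ∀ᶠ t : ℕ in atTop, ‖a ^ t‖ ≤ (r : ℝ) ^ t := by
    filter_upwards [(spectrum.pow_nnnorm_pow_one_div_tendsto_nhds_spectralRadius
      a).eventually_lt_const hρr, eventually_gt_atTop 0] with t ht ht0
    have ht' : (0 : ℝ) < t := by exact_mod_cast ht0
    rw [one_div, ENNReal.rpow_inv_lt_iff ht', ENNReal.rpow_natCast, ← ENNReal.coe_pow,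
      ENNReal.coe_lt_coe] at ht
    exact_mod_cast ht.le
  exact squeeze_zero_norm' hbound
    (tendsto_pow_atTop_nhds_zero_of_lt_one r.coe_nonneg (mod_cast hr1))

namespace Matrix

variable {ι n : Type*} [Fintype ι]

theorem tendsto_pow_atTop_nhds_zero_of_spectralRadius_map_ofReal_lt_one [Fintype n]
    [DecidableEq n] {C : Matrix n n ℝ} (h : spectralRadius ℂ (C.map Complex.ofReal) < 1) :
    Tendsto (C ^ ·) atTop (𝓝 0) := by
  have hC : Tendsto ((C.map Complex.ofReal) ^ ·) atTop (𝓝 0) := by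
    -- any matrix algebra norm will do: all of them induce the entrywise topology
    let := Matrix.linftyOpNormedRing (n := n) (α := ℂ)
    let := Matrix.linftyOpNormedAlgebra (n := n) (α := ℂ) (R := ℂ)
    exact tendsto_pow_atTop_nhds_zero_of_spectralRadius_lt_one h
  have hre : ∀ t, ((C.map Complex.ofReal) ^ t).map Complex.re = C ^ t := fun t => by
    change (Complex.ofRealHom.mapMatrix C ^ t).map Complex.re = C ^ t
    rw [← map_pow, RingHom.mapMatrix_apply, map_map]
    ext; simp
  simpa [Function.comp_def, hre] using
    ((continuous_id.matrix_map Complex.continuous_re).tendsto 0).comp hC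

section Dynamics

variable {R : Type*} [CommRing R] [Fintype n]

theorem one_kronecker_add_kronecker_mulVec_vec [DecidableEq ι] (A F : Matrix n n R)
    (L : Matrix ι ι R) (X : Matrix n ι R) :
    (1 ⊗ₖ A + L ⊗ₖ F) *ᵥ vec X = vec (A * X + F * X * Lᵀ) := by
  rw [add_mulVec, ← vec_mul_eq_mulVec, kronecker_mulVec_vec, vec_add]

theorem mulVec_eq_pow_mulVec_of_mulVec_eq_smul [DecidableEq n] {A F : Matrix n n R}
    {L : Matrix ι ι R} {X : ℕ → Matrix n ι R} (hX : ∀ t, X (t + 1) = A * X t + F * X t * Lᵀ)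
    {u : ι → R} {μ : R} (hu : Lᵀ *ᵥ u = μ • u) (t : ℕ) :
    X t *ᵥ u = (A + μ • F) ^ t *ᵥ (X 0 *ᵥ u) := by
  induction t with
  | zero => simp
  | succ t ih =>
    rw [hX, pow_succ', ← mulVec_mulVec, ← ih, add_mulVec, ← mulVec_mulVec, ← mulVec_mulVec,
      ← mulVec_mulVec, hu, add_mulVec, smul_mulVec, mulVec_smul, mulVec_smul]

end Dynamics

variable [DecidableEq ι]

theorem mulVec_col_eq_smul_of_conj_eq_diagonal {L U : Matrix ι ι ℝ} {lam : ι → ℝ}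
    (hU : U * Uᵀ = 1) (hdiag : Uᵀ * L * U = diagonal lam) (k : ι) :
    L *ᵥ U.col k = lam k • U.col k := by
  have hLU : L * U = U * diagonal lam := by
    rw [← hdiag, ← Matrix.mul_assoc, ← Matrix.mul_assoc, hU, Matrix.one_mul]
  rw [← mulVec_single_one, mulVec_mulVec, hLU, ← mulVec_mulVec, mulVec_single_one]
  ext i; simp [mulVec, dotProduct, diagonal, mul_comm]

theorem eq_smul_col_of_mulVec_eq_zero {L U : Matrix ι ι ℝ} {lam : ι → ℝ} {k₀ : ι}
    (hU : U * Uᵀ = 1) (hdiag : Uᵀ * L * U = diagonal lam) (hlam : ∀ k ≠ k₀, lam k ≠ 0)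
    {v : ι → ℝ} (hv : L *ᵥ v = 0) : v = (Uᵀ *ᵥ v) k₀ • U.col k₀ := by
  set c := Uᵀ *ᵥ v
  have hUc : U *ᵥ c = v := by rw [mulVec_mulVec, hU, one_mulVec]
  have hDc : diagonal lam *ᵥ c = 0 := by
    rw [← hdiag, ← mulVec_mulVec, ← mulVec_mulVec, hUc, hv, mulVec_zero]
  have hc : c = Pi.single k₀ (c k₀) := by
    ext k
    by_cases hk : k = k₀
    · subst hk; simp
    · have hk' := congrFun hDc k
      simp only [mulVec_diagonal, Pi.zero_apply, mul_eq_zero] at hk'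
      simp [hk, hk'.resolve_left (hlam k hk)]
  calc v = U *ᵥ c := hUc.symm
    _ = c k₀ • U.col k₀ := by rw [hc]; ext; simp [mul_comm]

theorem col_apply_eq_of_mulVec_one_eq_zero {L U : Matrix ι ι ℝ} {lam : ι → ℝ} {k₀ : ι}
    (hU : U * Uᵀ = 1) (hdiag : Uᵀ * L * U = diagonal lam) (hlam : ∀ k ≠ k₀, lam k ≠ 0)
    (hL : L *ᵥ (fun _ => 1) = 0) (i j : ι) : U i k₀ = U j k₀ := by
  have hones := congrFun (eq_smul_col_of_mulVec_eq_zero hU hdiag hlam hL)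
  have hi := hones i
  have hj := hones j
  simp only [Pi.smul_apply, col_apply, smul_eq_mul] at hi hj
  exact mul_left_cancel₀ (left_ne_zero_of_mul_eq_one hi.symm) (hi.symm.trans hj)

theorem col_eq_sum_smul_mulVec_col {U : Matrix ι ι ℝ} (hU : U * Uᵀ = 1) (X : Matrix n ι ℝ)
    (i : ι) : X.col i = ∑ k, U i k • (X *ᵥ U.col k) := by
  have hcol : ∑ k, U i k • U.col k = Pi.single i 1 := by
    ext l
    simpa [Finset.sum_apply, mul_apply, mul_comm, one_apply, Pi.single_apply, eq_comm] using
      congrFun (congrFun hU l) i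
  simp_rw [← mulVec_smul, ← mulVec_sum, hcol, mulVec_single_one]

theorem tendsto_col_sub_col_of_tendsto_mulVec_col {U : Matrix ι ι ℝ} {k₀ : ι}
    (hU : U * Uᵀ = 1) (hconst : ∀ i j, U i k₀ = U j k₀) {X : ℕ → Matrix n ι ℝ}
    (hmode : ∀ k ≠ k₀, Tendsto (fun t => X t *ᵥ U.col k) atTop (𝓝 0)) (i j : ι) :
    Tendsto (fun t => (X t).col i - (X t).col j) atTop (𝓝 0) := by
  have hterm : ∀ k, Tendsto (fun t => (U i k - U j k) • (X t *ᵥ U.col k)) atTop (𝓝 0) := by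
    intro k
    by_cases hk : k = k₀
    · simp [hk, hconst i j]
    · simpa using (hmode k hk).const_smul (U i k - U j k)
  have hsum : ∀ t, ∑ k, (U i k - U j k) • (X t *ᵥ U.col k) = (X t).col i - (X t).col j := by
    intro t
    simp only [sub_smul, Finset.sum_sub_distrib, ← col_eq_sum_smul_mulVec_col hU]
  simpa only [hsum, Finset.sum_const_zero] using tendsto_finsetSum Finset.univ fun k _ => hterm k

end Matrix

theorem stmt_6_general {n m M : ℕ} (hM : 0 < M)
    (A : Matrix (Fin n) (Fin n) ℝ) (B : Matrix (Fin n) (Fin m) ℝ)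
    (K : Matrix (Fin m) (Fin n) ℝ)
    (L : Matrix (Fin M) (Fin M) ℝ)
    (hones : L.mulVec (fun _ => (1 : ℝ)) = 0)
    (U : Matrix (Fin M) (Fin M) ℝ) (lam : Fin M → ℝ)
    (hU : Uᵀ * U = 1) (hdiag : Uᵀ * L * U = Matrix.diagonal lam)
    (hconn : ∀ i : Fin M, i ≠ ⟨0, hM⟩ → 0 < lam i)
    (hρ : ∀ i : Fin M, i ≠ ⟨0, hM⟩ →
      spectralRadius ℂ (((A + lam i • (B * K)).map Complex.ofReal)) < 1)
    (x : ℕ → (Fin M × Fin n) → ℝ)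
    (hx : ∀ t, x (t + 1) =
      ((1 : Matrix (Fin M) (Fin M) ℝ) ⊗ₖ A + L ⊗ₖ (B * K)).mulVec (x t)) :
    ∀ i j : Fin M,
      Tendsto (fun t => ‖(fun p : Fin n => x t (i, p) - x t (j, p))‖) atTop (𝓝 0) := by
  intro i j
  have hUUt : U * Uᵀ = 1 := mul_eq_one_comm.mp hU
  have hdiagT : Uᵀ * Lᵀ * U = diagonal lam := by
    simpa [Matrix.mul_assoc] using congrArg transpose hdiag
  let X : ℕ → Matrix (Fin n) (Fin M) ℝ := fun t => of fun p i => x t (i, p)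
  have hX : ∀ t, X (t + 1) = A * X t + (B * K) * X t * Lᵀ := fun t =>
    vec_inj.mp ((hx t).trans (one_kronecker_add_kronecker_mulVec_vec _ _ _ (X t)))
  have hmode : ∀ k ≠ ⟨0, hM⟩, Tendsto (fun t => X t *ᵥ U.col k) atTop (𝓝 0) := by
    intro k hk
    rw [funext (mulVec_eq_pow_mulVec_of_mulVec_eq_smul hX
      (mulVec_col_eq_smul_of_conj_eq_diagonal hUUt hdiagT k))]
    simpa only [id, zero_mulVec, Function.comp_def] using
      ((continuous_id.matrix_mulVec (continuous_const (y := X 0 *ᵥ U.col k))).tendsto 0).comp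
        (tendsto_pow_atTop_nhds_zero_of_spectralRadius_map_ofReal_lt_one (hρ k hk))
  have hconst :=
    col_apply_eq_of_mulVec_one_eq_zero hUUt hdiag (fun k hk => (hconn k hk).ne') hones
  have h := (tendsto_col_sub_col_of_tendsto_mulVec_col hUUt hconst hmode i j).norm
  rwa [norm_zero] at h

/-- Consensus sufficiency: if `L` is the symmetric Laplacian of a connected graph
with eigenvalues `0 = λ₁ < λ₂ ≤ … ≤ λ_M` and `ρ(A + λ_i B K) < 1` for `i ≥ 2`,
then the dynamics `x(t+1) = (I_M ⊗ A + L ⊗ BK) x(t)` achieves consensus: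
`‖x_i(t) − x_j(t)‖ → 0` for all agents `i, j`. -/
theorem stmt_6 {n m M : ℕ} (hM : 0 < M)
    (A : Matrix (Fin n) (Fin n) ℝ) (B : Matrix (Fin n) (Fin m) ℝ)
    (K : Matrix (Fin m) (Fin n) ℝ)
    (L : Matrix (Fin M) (Fin M) ℝ) (hsym : L.IsSymm)
    (hones : L.mulVec (fun _ => (1 : ℝ)) = 0)
    (U : Matrix (Fin M) (Fin M) ℝ) (lam : Fin M → ℝ)
    (hU : Uᵀ * U = 1) (hdiag : Uᵀ * L * U = Matrix.diagonal lam)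
    (hlam0 : lam ⟨0, hM⟩ = 0)
    (hconn : ∀ i : Fin M, i ≠ ⟨0, hM⟩ → 0 < lam i)
    (hmono : Monotone lam)
    (hρ : ∀ i : Fin M, i ≠ ⟨0, hM⟩ →
      spectralRadius ℂ (((A + lam i • (B * K)).map Complex.ofReal)) < 1)
    (x : ℕ → (Fin M × Fin n) → ℝ)
    (hx : ∀ t, x (t + 1) =
      ((1 : Matrix (Fin M) (Fin M) ℝ) ⊗ₖ A + L ⊗ₖ (B * K)).mulVec (x t)) :
    ∀ i j : Fin M,
      Tendsto (fun t => ‖(fun p : Fin n => x t (i, p) - x t (j, p))‖) atTop (𝓝 0) :=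
  stmt_6_general hM A B K L hones U lam hU hdiag hconn hρ x hx
end

section
/- If a graph G on M vertices is r-robust with r ≥ F+1, and from the neighborhood of each vertex at most F edges are removed, then the resulting graph is 1-robust (in particular, connected). -/
open SimpleGraph Finset

variable {V : Type*}

/-- A nonempty vertex set `S` is `r`-reachable in `G` if some vertex of `S` has at
least `r` neighbors outside `S`. -/
def rReachable [Fintype V] [DecidableEq V] (G : SimpleGraph V) [DecidableRel G.Adj]
    (S : Finset V) (r : ℕ) : Prop :=
  ∃ i ∈ S, r ≤ (G.neighborFinset i \ S).card

/-- `G` is `r`-robust if for every pair of nonempty disjoint vertex subsets, at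
least one of them is `r`-reachable. -/
def rRobust [Fintype V] [DecidableEq V] (G : SimpleGraph V) [DecidableRel G.Adj]
    (r : ℕ) : Prop :=
  ∀ S₁ S₂ : Finset V, S₁.Nonempty → S₂.Nonempty → Disjoint S₁ S₂ →
    rReachable G S₁ r ∨ rReachable G S₂ r

/-- If `G` is `r`-robust with `r ≥ F + 1` and at most `F` incident edges are removed
at each vertex, the resulting graph is `1`-robust, and in particular connected. -/
theorem stmt_10 [Fintype V] [DecidableEq V] [Nonempty V]
    (G H : SimpleGraph V) [DecidableRel G.Adj] [DecidableRel H.Adj]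
    (hle : H ≤ G) (F r : ℕ) (hr : F + 1 ≤ r) (hrob : rRobust G r)
    (hrem : ∀ v : V, (G.neighborFinset v \ H.neighborFinset v).card ≤ F) :
    rRobust H 1 ∧ H.Connected := by
  classical
  have key : ∀ S : Finset V, rReachable G S r → rReachable H S 1 := by
    intro S ⟨i, hiS, hcard⟩
    refine ⟨i, hiS, ?_⟩
    have hsub : (G.neighborFinset i \ S) \ (G.neighborFinset i \ H.neighborFinset i)
        ⊆ H.neighborFinset i \ S := by
      intro x hx
      simp only [Finset.mem_sdiff, SimpleGraph.mem_neighborFinset, not_and, not_not] at hx ⊢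
      exact ⟨hx.2 hx.1.1, hx.1.2⟩
    have h1 : (G.neighborFinset i \ S).card - (G.neighborFinset i \ H.neighborFinset i).card
        ≤ ((G.neighborFinset i \ S) \ (G.neighborFinset i \ H.neighborFinset i)).card :=
      Finset.le_card_sdiff _ _
    have h2 := hrem i
    have : 1 ≤ (G.neighborFinset i \ S).card - (G.neighborFinset i \ H.neighborFinset i).card := by
      omega
    calc 1 ≤ _ := this
      _ ≤ _ := h1
      _ ≤ _ := Finset.card_le_card hsub
  have hH1 : rRobust H 1 := by
    intro S₁ S₂ h1 h2 hd
    rcases hrob S₁ S₂ h1 h2 hd with h | h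
    · exact Or.inl (key _ h)
    · exact Or.inr (key _ h)
  refine ⟨hH1, ?_⟩
  rw [SimpleGraph.connected_iff]
  refine ⟨fun u v => ?_, ‹Nonempty V›⟩
  by_contra hnr
  set S : Finset V := Finset.univ.filter (fun w => H.Reachable u w) with hS
  set T : Finset V := Finset.univ.filter (fun w => ¬ H.Reachable u w) with hT
  have huS : u ∈ S := by exact Finset.mem_filter.mpr ⟨Finset.mem_univ u, Reachable.refl u⟩
  have hvT : v ∈ T := by simp [hT, hnr]
  have hd : Disjoint S T := by
    rw [Finset.disjoint_left]
    intro x hx hx'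
    simp [hS] at hx; simp [hT] at hx'; exact hx' hx
  rcases hH1 S T ⟨u, huS⟩ ⟨v, hvT⟩ hd with ⟨i, hiS, hc⟩ | ⟨i, hiT, hc⟩
  · obtain ⟨j, hj⟩ := Finset.card_pos.mp (le_trans Nat.one_pos hc)
    simp only [Finset.mem_sdiff, SimpleGraph.mem_neighborFinset] at hj
    have : H.Reachable u j := by
      simp [hS] at hiS
      exact hiS.trans hj.1.reachable
    exact hj.2 (by simp [hS, this])
  · obtain ⟨j, hj⟩ := Finset.card_pos.mp (le_trans Nat.one_pos hc)
    simp only [Finset.mem_sdiff, SimpleGraph.mem_neighborFinset] at hj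
    have hjS : H.Reachable u j := by
      by_contra h
      exact hj.2 (by simp [hT, h])
    simp [hT] at hiT
    exact hiT (hjS.trans hj.1.symm.reachable)
end

section
/- An r-robust graph remains (r−s)-robust after removing at most s incident edges from each vertex, for any 0 ≤ s < r. -/
open SimpleGraph Finset

variable {V : Type*}

lemma reach_aux [Fintype V] [DecidableEq V]
    (G H : SimpleGraph V) [DecidableRel G.Adj] [DecidableRel H.Adj]
    (s r : ℕ)
    (hrem : ∀ v : V, (G.neighborFinset v \ H.neighborFinset v).card ≤ s)
    (S : Finset V) (h : rReachable G S r) : rReachable H S (r - s) := by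
  obtain ⟨i, hiS, hir⟩ := h
  refine ⟨i, hiS, ?_⟩
  have hsub : (G.neighborFinset i \ S) \ (H.neighborFinset i \ S)
      ⊆ G.neighborFinset i \ H.neighborFinset i := by
    intro x hx
    simp only [mem_sdiff] at hx ⊢
    exact ⟨hx.1.1, fun hxH => hx.2 ⟨hxH, hx.1.2⟩⟩
  have h1 : ((G.neighborFinset i \ S) \ (H.neighborFinset i \ S)).card ≤ s :=
    le_trans (card_le_card hsub) (hrem i)
  have h2 : (G.neighborFinset i \ S).card ≤
      ((G.neighborFinset i \ S) \ (H.neighborFinset i \ S)).card +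
      (H.neighborFinset i \ S).card := card_le_card_sdiff_add_card
  omega

/-- An `r`-robust graph remains `(r − s)`-robust after removing at most `s`
incident edges from each vertex, for any `0 ≤ s < r`. -/
theorem stmt_11 [Fintype V] [DecidableEq V]
    (G H : SimpleGraph V) [DecidableRel G.Adj] [DecidableRel H.Adj]
    (hle : H ≤ G) (s r : ℕ) (hs : s < r) (hrob : rRobust G r)
    (hrem : ∀ v : V, (G.neighborFinset v \ H.neighborFinset v).card ≤ s) :
    rRobust H (r - s) := by
  intro S₁ S₂ h1 h2 hd
  rcases hrob S₁ S₂ h1 h2 hd with h | h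
  · exact Or.inl (reach_aux G H s r hrem S₁ h)
  · exact Or.inr (reach_aux G H s r hrem S₂ h)
end
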